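/- arXiv:2312.08753 — 2 statements merged into one kernel-verified Lean document; each statement's English description precedes it below -/
import Mathlib

section
/- For w > 0 and fixed SINR value γ ≥ 0, the function g(η) = w log(1+η) − w η + w(1+η) γ/(1+γ) over η ≥ 0 is maximized at η = γ, and g(γ) = w log(1+γ). -/
/-!
Up to the constant `w`, the objective is `η ↦ w (log (1 + η) - (1 + η) / (1 + γ))`, and
`x ↦ log x - x / b` is maximised at `x = b` by `log t ≤ t - 1` applied to `t = x / b`.
-/

open Real

lemma Real.log_sub_div_le_log_sub_one {a b : ℝ} (ha : 0 < a) (hb : 0 < b) :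
    log a - a / b ≤ log b - 1 := by
  have h := log_le_sub_one_of_pos (div_pos ha hb)
  rw [log_div ha.ne' hb.ne'] at h
  linarith

lemma lagrangian_dual_objective_eq (w γ η : ℝ) (hγ : 1 + γ ≠ 0) :
    w * log (1 + η) - w * η + w * (1 + η) * γ / (1 + γ) =
      w * (log (1 + η) - (1 + η) / (1 + γ)) + w := by
  field_simp
  ring

theorem stmt5 (w γ : ℝ) (hw : 0 < w) (hγ : 0 ≤ γ) :
    let g : ℝ → ℝ := fun η => w * Real.log (1 + η) - w * η + w * (1 + η) * γ / (1 + γ)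
    (∀ η ≥ (0 : ℝ), g η ≤ g γ) ∧ g γ = w * Real.log (1 + γ) := by
  intro g
  have h1γ : 0 < 1 + γ := by linarith
  have hg : ∀ η, g η = w * (log (1 + η) - (1 + η) / (1 + γ)) + w :=
    fun η => lagrangian_dual_objective_eq w γ η h1γ.ne'
  have hgγ : g γ = w * log (1 + γ) := by
    rw [hg, div_self h1γ.ne']
    ring
  refine ⟨fun η hη => ?_, hgγ⟩
  rw [hgγ, hg]
  have hmax := Real.log_sub_div_le_log_sub_one (by linarith : 0 < 1 + η) h1γ
  linarith [mul_le_mul_of_nonneg_left hmax hw.le]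
end

section
/- For the block-diagonal covariance structure: if C[q,y] = blkdiag(a1·a_L a_L^H + a2·I_L, d·I_a) and C[y,y] = blkdiag(a1·a_L a_L^H + (a2+s)·I_L, (d+s)·I_a) with a1, a2, d, s > 0 and ‖a_L‖^2 = L, then C[q,y] C[y,y]^{-1} = blkdiag(a3·a_L a_L^H + a4·I_L, a5·I_a) where a3 = a1 s/[(a2+s)(a2+s+L a1)], a4 = a2/(a2+s), a5 = d/(d+s). -/
open Matrix

/-! Writing `P = a_L a_Lᴴ`, the hypothesis `‖a_L‖² = L` gives `P² = L • P`, so the matrices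
`x • P + y • 1` form a commutative algebra closed under products and (when nonsingular) inverses.
Inverting the block `a₁ P + (a₂ + s) I` inside this algebra is the Woodbury step; the rest is
blockwise multiplication and scalar arithmetic. -/

section RankOneAlgebra

variable {R A : Type*} [CommSemiring R] [Semiring A] [Algebra R A] {p : A} {c : R}

theorem smul_add_smul_one_mul_smul_add_smul_one (hp : p * p = c • p) (x y u v : R) :
    (x • p + y • (1 : A)) * (u • p + v • 1) = (x * u * c + x * v + y * u) • p + (y * v) • 1 := by
  simp only [add_mul, mul_add, smul_mul_smul, hp, mul_one, one_mul, smul_smul, add_smul]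
  abel

theorem smul_add_smul_one_mul_inverse {K : Type*} [Field K] [Algebra K A] {p : A} {c : K}
    (hp : p * p = c • p) {a t : K} (ht : t ≠ 0) (htc : t + a * c ≠ 0) :
    (a • p + t • (1 : A)) * ((-a / (t * (t + a * c))) • p + t⁻¹ • 1) = 1 := by
  rw [smul_add_smul_one_mul_smul_add_smul_one hp]
  have hp_coeff :
      a * (-a / (t * (t + a * c))) * c + a * t⁻¹ + t * (-a / (t * (t + a * c))) = 0 := by
    field_simp
    ring
  rw [hp_coeff, mul_inv_cancel₀ ht, zero_smul, zero_add, one_smul]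

end RankOneAlgebra

theorem Matrix.inv_fromBlocks_zero_zero {m n α : Type*} [Fintype m] [Fintype n] [DecidableEq m]
    [DecidableEq n] [CommRing α] {A A' : Matrix m m α} {D D' : Matrix n n α}
    (hA : A * A' = 1) (hD : D * D' = 1) :
    (fromBlocks A 0 0 D)⁻¹ = fromBlocks A' 0 0 D' := by
  refine inv_eq_right_inv ?_
  rw [fromBlocks_multiply, hA, hD]
  simp

theorem stmt17 {L a : ℕ} (a1 a2 d s : ℝ)
    (h1 : 0 < a1) (h2 : 0 < a2) (hd : 0 < d) (hs : 0 < s)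
    (aL : Fin L → ℂ) (haL : star aL ⬝ᵥ aL = (L : ℂ)) :
    (Matrix.fromBlocks
        ((a1 : ℂ) • vecMulVec aL (star aL) + (a2 : ℂ) • 1) 0 0
        ((d : ℂ) • (1 : Matrix (Fin a) (Fin a) ℂ))) *
    (Matrix.fromBlocks
        ((a1 : ℂ) • vecMulVec aL (star aL) + (((a2 + s) : ℝ) : ℂ) • 1) 0 0
        ((((d + s) : ℝ) : ℂ) • (1 : Matrix (Fin a) (Fin a) ℂ)))⁻¹
    = Matrix.fromBlocks
        ((((a1 * s / ((a2 + s) * (a2 + s + L * a1)) : ℝ)) : ℂ) • vecMulVec aL (star aL)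
          + (((a2 / (a2 + s) : ℝ)) : ℂ) • 1) 0 0
        ((((d / (d + s) : ℝ)) : ℂ) • (1 : Matrix (Fin a) (Fin a) ℂ)) := by
  have hP :
      vecMulVec aL (star aL) * vecMulVec aL (star aL) = (L : ℂ) • vecMulVec aL (star aL) := by
    rw [vecMulVec_mul_vecMulVec, haL, vecMulVec_smul]
  have ht : ((a2 + s : ℝ) : ℂ) ≠ 0 := by exact_mod_cast (by positivity : a2 + s ≠ 0)
  have htc : ((a2 + s : ℝ) : ℂ) + a1 * L ≠ 0 := by
    exact_mod_cast (by positivity : a2 + s + a1 * L ≠ 0)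
  have hds : ((d + s : ℝ) : ℂ) ≠ 0 := by exact_mod_cast (by positivity : d + s ≠ 0)
  have hD :
      (((d + s : ℝ) : ℂ) • (1 : Matrix (Fin a) (Fin a) ℂ)) * (((d + s : ℝ) : ℂ)⁻¹ • 1) = 1 := by
    rw [smul_mul_smul, mul_one, mul_inv_cancel₀ hds, one_smul]
  rw [inv_fromBlocks_zero_zero (smul_add_smul_one_mul_inverse hP ht htc) hD, fromBlocks_multiply]
  simp only [Matrix.mul_zero, Matrix.zero_mul, add_zero, zero_add, smul_mul_smul, mul_one]
  rw [smul_add_smul_one_mul_smul_add_smul_one hP]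
  congr 4 <;> push_cast at ht htc hds ⊢ <;> field_simp
  ring
end
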